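/- arXiv:2604.20192 — 9 statements merged into one kernel-verified Lean document; each statement's English description precedes it below -/
import Mathlib

section
/- Player A's equilibrium expected utility in a single battle with homogeneous success function equals Δ_A · φ(Δ_A/Δ_B); that is, p(x_A*, x_B*)·Δ_A − x_A* = Δ_A·[γ(Δ_A/Δ_B) − (Δ_A/Δ_B)γ'(Δ_A/Δ_B)]. -/
/-! Differentiating the symmetry `γ x + γ (1/x) = 1` gives `γ'(1/t) = t² γ'(t)`. With
`t = Δ_A/Δ_B` this makes the efforts `x_A* = Δ_A t γ'(t)` and `x_B* = Δ_A γ'(t)`, so the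
contest ratio `x_A*/x_B*` is `t` itself and A's payoff is `Δ_A γ(t) - Δ_A t γ'(t)`. -/

theorem deriv_one_div_eq_sq_mul_deriv {γ : ℝ → ℝ} {c x : ℝ} (hx : 0 < x)
    (hdx : DifferentiableAt ℝ γ x) (hdx' : DifferentiableAt ℝ γ (1 / x))
    (hsym : ∀ y, 0 < y → γ y + γ (1 / y) = c) :
    deriv γ (1 / x) = x ^ 2 * deriv γ x := by
  have hinv : HasDerivAt (fun y : ℝ => 1 / y) (-(x ^ 2)⁻¹) x := by
    simpa only [one_div] using hasDerivAt_inv hx.ne'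
  have hsum : HasDerivAt (fun y => γ y + γ (1 / y))
      (deriv γ x + deriv γ (1 / x) * (-(x ^ 2)⁻¹)) x :=
    hdx.hasDerivAt.add (hdx'.hasDerivAt.comp x hinv)
  have hconst : (fun y => γ y + γ (1 / y)) =ᶠ[nhds x] fun _ => c := by
    filter_upwards [Ioi_mem_nhds hx] with y hy using hsym y hy
  have hzero := hsum.unique ((hasDerivAt_const x c).congr_of_eventuallyEq hconst)
  field_simp at hzero ⊢
  linarith

theorem stmt_3_general (γ : ℝ → ℝ)
    (hd : ∀ x, 0 < x → DifferentiableAt ℝ γ x)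
    (hpos : ∀ x, 0 < x → 0 < deriv γ x)
    (hsym : ∀ x, 0 < x → γ x + γ (1/x) = 1)
    (ΔA ΔB xA xB : ℝ) (hA : 0 < ΔA) (hB : 0 < ΔB)
    (hxA : xA = ΔB * deriv γ (ΔB / ΔA))
    (hxB : xB = ΔA * deriv γ (ΔA / ΔB)) :
    γ (xA / xB) * ΔA - xA =
      ΔA * (γ (ΔA / ΔB) - (ΔA / ΔB) * deriv γ (ΔA / ΔB)) := by
  set t := ΔA / ΔB with ht
  have htpos : 0 < t := div_pos hA hB
  have hBA : ΔB / ΔA = 1 / t := by rw [ht, one_div_div]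
  have hxA' : xA = ΔA * t * deriv γ t := by
    rw [hxA, hBA, deriv_one_div_eq_sq_mul_deriv htpos (hd t htpos)
      (hd _ (one_div_pos.mpr htpos)) hsym, ht]
    field_simp
  have hratio : xA / xB = t := by
    have := (hpos t htpos).ne'
    rw [hxA', hxB]
    field_simp
  rw [hratio, hxA']
  ring

/-- player A's equilibrium expected utility equals Δ_A·φ(Δ_A/Δ_B), i.e.,
p(x_A*,x_B*)·Δ_A − x_A* = Δ_A·[γ(Δ_A/Δ_B) − (Δ_A/Δ_B)γ'(Δ_A/Δ_B)],
where p(x,x') = γ(x/x'). -/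
theorem stmt_3 (γ : ℝ → ℝ)
    (hγ0 : γ 0 = 0)
    (hγtop : Filter.Tendsto γ Filter.atTop (nhds 1))
    (hrange : ∀ x, 0 ≤ x → γ x ∈ Set.Icc (0:ℝ) 1)
    (hd : ∀ x, 0 < x → DifferentiableAt ℝ γ x)
    (hd2 : ∀ x, 0 < x → DifferentiableAt ℝ (deriv γ) x)
    (hpos : ∀ x, 0 < x → 0 < deriv γ x)
    (hconc : ∀ x, 0 < x → deriv (deriv γ) x ≤ 0)
    (hsym : ∀ x, 0 < x → γ x + γ (1/x) = 1)
    (ΔA ΔB xA xB : ℝ) (hA : 0 < ΔA) (hB : 0 < ΔB)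
    (hxA : xA = ΔB * deriv γ (ΔB / ΔA))
    (hxB : xB = ΔA * deriv γ (ΔA / ΔB)) :
    γ (xA / xB) * ΔA - xA =
      ΔA * (γ (ΔA / ΔB) - (ΔA / ΔB) * deriv γ (ΔA / ΔB)) :=
  stmt_3_general γ hd hpos hsym ΔA ΔB xA xB hA hB hxA hxB
end

section
/- For all θ > 0, φ(θ) + φ(1/θ) < 1, where φ(θ) := γ(θ) − θγ'(θ). -/
/-- for all θ > 0, φ(θ) + φ(1/θ) < 1 where φ(θ) = γ(θ) − θγ'(θ). -/
theorem stmt_5 (γ φ : ℝ → ℝ)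
    (hrange : ∀ x, 0 < x → γ x ∈ Set.Icc (0:ℝ) 1)
    (hd : ∀ x, 0 < x → DifferentiableAt ℝ γ x)
    (hd2 : ∀ x, 0 < x → DifferentiableAt ℝ (deriv γ) x)
    (hpos : ∀ x, 0 < x → 0 < deriv γ x)
    (hconc : ∀ x, 0 < x → deriv (deriv γ) x ≤ 0)
    (hsym : ∀ x, 0 < x → γ x + γ (1/x) = 1)
    (hφ : ∀ θ, φ θ = γ θ - θ * deriv γ θ) :
    ∀ θ : ℝ, 0 < θ → φ θ + φ (1/θ) < 1 := by
  intro θ hθ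
  have hθ' : 0 < 1/θ := by positivity
  have h1 := hpos θ hθ
  have h2 := hpos (1/θ) hθ'
  have hs := hsym θ hθ
  rw [hφ θ, hφ (1/θ)]
  nlinarith [mul_pos hθ h1, mul_pos hθ' h2]
end

section
/- Consider a single battle where, given continuation values V_A^A > V_A^B for player A and V_B^B > V_B^A for player B (superscript denotes the battle winner), players' equilibrium payoffs are U_A* = V_A^B + π_A*(V_A^A − V_A^B) and U_B* = V_B^A + π_B*(V_B^B − V_B^A), with gain ratios satisfying π_A* + π_B* ≤ 1 and min{π_A*, π_B*} ≥ π₁* > 0 whenever the corresponding winning-value ratio is at least 1. Then U_A* + U_B* > π₁* · max{V_A^A + V_B^A, V_A^B + V_B^B}. -/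
/-- in a single battle with continuation values V_A^A > V_A^B, V_B^B > V_B^A,
equilibrium payoffs U_A* = V_A^B + π_A*(V_A^A − V_A^B), U_B* = V_B^A + π_B*(V_B^B − V_B^A),
gain ratios with π_A* + π_B* ≤ 1 and min{π_A*,π_B*} ≥ π₁* > 0 whenever the corresponding
winning-value ratio is at least 1, we have
U_A* + U_B* > π₁*·max{V_A^A + V_B^A, V_A^B + V_B^B}. -/
theorem stmt_8 (VAA VAB VBB VBA πA πB π1 UA UB : ℝ)
    (h1 : VAB < VAA) (h2 : VBA < VBB)
    (hVAB : 0 ≤ VAB) (hVBA : 0 ≤ VBA)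
    (hπA : πA ∈ Set.Ioo (0:ℝ) 1) (hπB : πB ∈ Set.Ioo (0:ℝ) 1)
    (hsum : πA + πB ≤ 1) (hπ1 : 0 < π1)
    (hgA : VBB - VBA ≤ VAA - VAB → π1 ≤ πA)
    (hgB : VAA - VAB ≤ VBB - VBA → π1 ≤ πB)
    (hUA : UA = VAB + πA * (VAA - VAB))
    (hUB : UB = VBA + πB * (VBB - VBA)) :
    π1 * max (VAA + VBA) (VAB + VBB) < UA + UB := by
  obtain ⟨hπA0, hπA1⟩ := hπA
  obtain ⟨hπB0, hπB1⟩ := hπB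
  subst hUA hUB
  rcases le_total (VBB - VBA) (VAA - VAB) with h | h
  · have hp := hgA h
    have hmax : max (VAA + VBA) (VAB + VBB) = VAA + VBA := by
      apply max_eq_left; linarith
    rw [hmax]
    nlinarith [mul_pos hπB0 (sub_pos.mpr h2), mul_le_mul_of_nonneg_right hp (le_of_lt (sub_pos.mpr h1)), mul_le_of_le_one_left hVAB (by linarith : π1 ≤ 1), mul_le_of_le_one_left hVBA (by linarith : π1 ≤ 1)]
  · have hp := hgB h
    have hmax : max (VAA + VBA) (VAB + VBB) = VAB + VBB := by
      apply max_eq_right; linarith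
    rw [hmax]
    nlinarith [mul_pos hπA0 (sub_pos.mpr h1), mul_le_mul_of_nonneg_right hp (le_of_lt (sub_pos.mpr h2)), mul_le_of_le_one_left hVAB (by linarith : π1 ≤ 1), mul_le_of_le_one_left hVBA (by linarith : π1 ≤ 1)]
end

section
/- Suppose V : {−N, …, N} → [0, v] is strictly increasing with V(N) = v, V(−N) = 0, and the increment recursion V(i+1) − V(i) = [(1−π(i))/π(i)][V(i) − V(i−1)] holds with π(i) ∈ (0,1). If there exist N' ∈ ℕ and π̃ > 1/2 such that π(i) ≥ π̃ for all i ≥ N', then for all i ≥ 0: (v − V(N'+i))/v ≤ [(1−π̃)/π̃]^i. In particular V(N'+i)/v → 1 as i → +∞, uniformly in N and v. -/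
/-- if π(i) ≥ π̃ > 1/2 for all i ≥ N', then
(v − V(N'+i))/v ≤ ((1−π̃)/π̃)^i, a bound independent of N and v; in particular
V(N'+i)/v → 1 as i → ∞, uniformly in N and v (the bound ((1−π̃)/π̃)^i → 0). -/
theorem stmt_12 (N N' : ℤ) (v : ℝ) (V π : ℤ → ℝ) (pt : ℝ)
    (hN : 1 ≤ N) (hN' : 0 ≤ N') (hv : 0 < v)
    (hrange : ∀ i, -N ≤ i → i ≤ N → V i ∈ Set.Icc (0:ℝ) v)
    (hmono : ∀ i j, -N ≤ i → i < j → j ≤ N → V i < V j)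
    (hVN : V N = v) (hVmN : V (-N) = 0)
    (hπ : ∀ i, -N+1 ≤ i → i ≤ N-1 → π i ∈ Set.Ioo (0:ℝ) 1)
    (hrec : ∀ i, -N+1 ≤ i → i ≤ N-1 →
      V (i+1) - V i = ((1 - π i) / π i) * (V i - V (i-1)))
    (hpt : 1/2 < pt) (hpt1 : pt < 1)
    (hbig : ∀ i, N' ≤ i → i ≤ N-1 → pt ≤ π i) :
    (∀ i : ℕ, N' + (i:ℤ) ≤ N → (v - V (N' + (i:ℤ))) / v ≤ ((1 - pt) / pt) ^ i) ∧
      Filter.Tendsto (fun i : ℕ => ((1 - pt) / pt) ^ i) Filter.atTop (nhds 0) := by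
  have hpt0 : 0 < pt := by linarith
  set r : ℝ := (1 - pt) / pt with hr
  have hr0 : 0 < r := div_pos (by linarith) hpt0
  have hr1 : r < 1 := by rw [hr, div_lt_one hpt0]; linarith
  have key : ∀ n : ℕ, ∀ k : ℤ, N' ≤ k → k ≤ N - 1 → N - 1 - k = (n : ℤ) →
      v - V (k + 1) ≤ r * (v - V k) := by
    intro n
    induction n with
    | zero =>
      intro k hk1 hk2 hk3
      have hkN : k = N - 1 := by omega
      subst hkN
      have h1 := hrange (N - 1) (by omega) (by omega)
      have hEq : (N - 1 + 1 : ℤ) = N := by ring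
      rw [hEq, hVN]
      nlinarith [h1.2]
    | succ n ih =>
      intro k hk1 hk2 hk3
      have hk2' : k + 1 ≤ N - 1 := by omega
      have ihh := ih (k + 1) (by omega) hk2' (by omega)
      have hπk := hπ (k + 1) (by omega) (by omega)
      have hrec1 := hrec (k + 1) (by omega) (by omega)
      have hbigk := hbig (k + 1) (by omega) (by omega)
      have hek : 0 ≤ V (k + 1) - V k := by
        have := hmono k (k + 1) (by omega) (by omega) (by omega)
        linarith
      have hρ : (1 - π (k + 1)) / π (k + 1) ≤ r := by
        rw [hr, div_le_div_iff₀ hπk.1 hpt0]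
        nlinarith [hπk.2]
      rw [show (k + 1 - 1 : ℤ) = k by ring] at hrec1
      have hstep : V (k + 1 + 1) - V (k + 1) ≤ r * (V (k + 1) - V k) := by
        calc V (k + 1 + 1) - V (k + 1)
            = ((1 - π (k + 1)) / π (k + 1)) * (V (k + 1) - V k) := hrec1
          _ ≤ r * (V (k + 1) - V k) := mul_le_mul_of_nonneg_right hρ hek
      nlinarith [ihh, hstep]
  have main : ∀ i : ℕ, N' + (i : ℤ) ≤ N → v - V (N' + (i : ℤ)) ≤ r ^ i * v := by
    intro i
    induction i with
    | zero =>
      intro h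
      simp only [Nat.cast_zero, add_zero, pow_zero, one_mul]
      have := hrange N' (by omega) (by exact_mod_cast (by simpa using h))
      linarith [this.1]
    | succ i ih =>
      intro h
      have h' : N' + (i : ℤ) ≤ N - 1 := by push_cast at h; omega
      have ihh := ih (by omega)
      have hk := key (N - 1 - (N' + i)).toNat (N' + i) (by omega) h' (by omega)
      have hcast : (N' + ((i : ℕ) + 1 : ℕ) : ℤ) = (N' + (i : ℤ)) + 1 := by push_cast; ring
      calc v - V (N' + ((i + 1 : ℕ) : ℤ)) = v - V ((N' + (i : ℤ)) + 1) := by rw [hcast]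
        _ ≤ r * (v - V (N' + (i : ℤ))) := hk
        _ ≤ r * (r ^ i * v) := by nlinarith
        _ = r ^ (i + 1) * v := by ring
  constructor
  · intro i h
    rw [div_le_iff₀ hv]
    exact main i h
  · exact tendsto_pow_atTop_nhds_zero_of_lt_one (le_of_lt hr0) hr1
end

section
/- Under the hypotheses of the tug-of-war recursion with π(i) ≥ π₁* > 0 for all i ≥ 0 and π(i) ≥ π̃ > 1/2 for i ≥ N', the value at the even state satisfies V(0)/v ≥ α where α := [1 + Σ_{j=0}^{N'−1} ((1−π₁*)/π₁*)^{j+1} + (r/(1−r))·((1−π₁*)/π₁*)^{N'}]^{−1} > 0 with r := (1−π̃)/π̃. Consequently expected total effort is at most (1 − 2α)v, uniformly over all margins N ≥ 1 and prizes v > 0. -/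
/-!
With `ρ i = (1 - π i) / π i`, the recursion reads `V (i + 1) - V i = ρ i (V i - V (i - 1))`.
Starting from `V (-N + 1) - V (-N) ≥ 0`, all increments are nonnegative, and for `n ≥ 0` the
increment `V (n + 1) - V n` is `V 0 - V (-1)` times `∏_{k ≤ n} ρ k`. Bounding `ρ k` by
`ρ₁ = (1 - π₁*)/π₁*` for `k < N'` and by `r = (1 - π̃)/π̃ < 1` from `N'` on, these products sum
to at most `S = Σ_{j < N'} ρ₁^(j+1) + r/(1-r) ρ₁^N'`, independently of `N`. Telescoping gives
`v - V 0 ≤ (V 0 - V (-1)) S ≤ V 0 S`, that is `α v = v / (1 + S) ≤ V 0`.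
-/

open Finset

lemma sub_eq_one_sub_div_mul_sub {a b c p : ℝ} (hp : p ≠ 0) (h : a = b + p * (c - b)) :
    c - a = (1 - p) / p * (a - b) := by
  field_simp
  linear_combination -h

lemma one_sub_div_le_one_sub_div {p q : ℝ} (hq : 0 < q) (hqp : q ≤ p) :
    (1 - p) / p ≤ (1 - q) / q := by
  rw [div_le_div_iff₀ (hq.trans_le hqp) hq]
  nlinarith

lemma one_sub_div_nonneg {p : ℝ} (hp0 : 0 < p) (hp1 : p ≤ 1) : 0 ≤ (1 - p) / p :=
  div_nonneg (by linarith) hp0.le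

lemma le_add_one_of_sub_eq_mul {f ρ : ℤ → ℝ} {a b : ℤ} (ha : f a ≤ f (a + 1))
    (hρ : ∀ i, a < i → i < b → 0 ≤ ρ i)
    (hstep : ∀ i, a < i → i < b → f (i + 1) - f i = ρ i * (f i - f (i - 1))) :
    ∀ i, a ≤ i → i < b → f i ≤ f (i + 1) := by
  intro i hai
  induction i, hai using Int.leInduction with
  | base => exact fun _ => ha
  | succ i hai ih =>
    intro hib
    have h := hstep (i + 1) (by omega) hib
    rw [add_sub_cancel_right] at h
    linarith [mul_nonneg (hρ (i + 1) (by omega) hib) (sub_nonneg.2 (ih (by omega)))]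

lemma le_mul_prod_of_succ_le_mul {e c : ℕ → ℝ} {K : ℕ} (hc : ∀ n, 0 ≤ c n)
    (he : ∀ n < K, e (n + 1) ≤ c n * e n) :
    ∀ n ≤ K, e n ≤ e 0 * ∏ k ∈ range n, c k := by
  intro n hn
  induction n with
  | zero => simp
  | succ n ih =>
    calc e (n + 1) ≤ c n * e n := he n hn
      _ ≤ c n * (e 0 * ∏ k ∈ range n, c k) := by gcongr; exacts [hc n, ih (by omega)]
      _ = e 0 * ∏ k ∈ range (n + 1), c k := by rw [prod_range_succ]; ring

lemma sub_le_mul_sum_prod_of_sub_le_mul {f : ℤ → ℝ} {c : ℕ → ℝ} {K : ℕ} (hc : ∀ n, 0 ≤ c n)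
    (hstep : ∀ n : ℕ, n < K → f (n + 1) - f n ≤ c n * (f n - f (n - 1))) :
    f K - f 0 ≤ (f 0 - f (-1)) * ∑ n ∈ range K, ∏ k ∈ range (n + 1), c k := by
  set e : ℕ → ℝ := fun n => f n - f (n - 1)
  have he : ∀ n < K, e (n + 1) ≤ c n * e n := fun n hn => by simpa [e] using hstep n hn
  calc f K - f 0 = ∑ n ∈ range K, e (n + 1) := by
        simpa [e] using (sum_range_sub (fun n : ℕ => f n) K).symm
    _ ≤ ∑ n ∈ range K, e 0 * ∏ k ∈ range (n + 1), c k :=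
        sum_le_sum fun n hn => le_mul_prod_of_succ_le_mul hc he (n + 1) (mem_range.1 hn)
    _ = (f 0 - f (-1)) * ∑ n ∈ range K, ∏ k ∈ range (n + 1), c k := by simp [e, mul_sum]

lemma geom_sum_range_succ_le_of_lt_one {r : ℝ} (hr0 : 0 ≤ r) (hr1 : r < 1) (M : ℕ) :
    ∑ i ∈ range M, r ^ (i + 1) ≤ r / (1 - r) := by
  simpa [sum_Ico_eq_sum_range, add_comm] using
    geom_sum_Ico_le_of_lt_one (m := 1) (n := M + 1) hr0 hr1

/-- The two-regime bound on the odds ratio `(1 - π k) / π k`. -/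
def regimeBound (N' : ℕ) (a r : ℝ) (k : ℕ) : ℝ := if k < N' then a else r

section regimeBound

variable {N' : ℕ} {a r : ℝ}

lemma regimeBound_nonneg (ha : 0 ≤ a) (hr : 0 ≤ r) (k : ℕ) : 0 ≤ regimeBound N' a r k := by
  unfold regimeBound; split_ifs <;> assumption

lemma prod_range_regimeBound_of_le {n : ℕ} (hn : n ≤ N') :
    ∏ k ∈ range n, regimeBound N' a r k = a ^ n := by
  rw [prod_eq_pow_card (f := regimeBound N' a r) fun k hk => if_pos (by simp at hk; omega),
    card_range]

lemma prod_range_regimeBound_add (n : ℕ) :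
    ∏ k ∈ range (N' + n), regimeBound N' a r k = a ^ N' * r ^ n := by
  rw [prod_range_add, prod_range_regimeBound_of_le le_rfl,
    prod_eq_pow_card (f := fun k => regimeBound N' a r (N' + k)) fun k _ => if_neg (by omega),
    card_range]

lemma sum_prod_range_regimeBound_le (ha : 0 ≤ a) (hr0 : 0 ≤ r) (hr1 : r < 1) (M : ℕ) :
    ∑ n ∈ range M, ∏ k ∈ range (n + 1), regimeBound N' a r k ≤
      ∑ j ∈ range N', a ^ (j + 1) + r / (1 - r) * a ^ N' := by
  have hP : ∀ n, 0 ≤ ∏ k ∈ range n, regimeBound N' a r k :=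
    fun n => prod_nonneg fun k _ => regimeBound_nonneg ha hr0 k
  calc ∑ n ∈ range M, ∏ k ∈ range (n + 1), regimeBound N' a r k
      ≤ ∑ n ∈ range (N' + M), ∏ k ∈ range (n + 1), regimeBound N' a r k :=
        sum_le_sum_of_subset_of_nonneg (range_subset_range.2 (by omega)) fun n _ _ => hP _
    _ = ∑ j ∈ range N', a ^ (j + 1) + a ^ N' * ∑ i ∈ range M, r ^ (i + 1) := by
        rw [sum_range_add, mul_sum]
        congr 1
        · exact sum_congr rfl fun j hj =>
            prod_range_regimeBound_of_le (by simp at hj; omega)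
        · exact sum_congr rfl fun i _ => prod_range_regimeBound_add (i + 1)
    _ ≤ ∑ j ∈ range N', a ^ (j + 1) + r / (1 - r) * a ^ N' := by
        rw [mul_comm (r / _)]
        gcongr
        exact geom_sum_range_succ_le_of_lt_one hr0 hr1 M

lemma one_sub_div_le_regimeBound {p a b : ℝ} {n : ℕ} (ha : 0 < a) (hb : 0 < b)
    (hpa : n < N' → a ≤ p) (hpb : N' ≤ n → b ≤ p) :
    (1 - p) / p ≤ regimeBound N' ((1 - a) / a) ((1 - b) / b) n := by
  unfold regimeBound
  split_ifs with h
  · exact one_sub_div_le_one_sub_div ha (hpa h)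
  · exact one_sub_div_le_one_sub_div hb (hpb (not_lt.1 h))

end regimeBound

theorem stmt_13_general (N : ℤ) (N' : ℕ) (v : ℝ) (V π : ℤ → ℝ) (π1 pt α : ℝ)
    (hN : 1 ≤ N)
    (hrange : ∀ i, -N ≤ i → i ≤ N → V i ∈ Set.Icc (0:ℝ) v)
    (hVN : V N = v) (hVmN : V (-N) = 0)
    (hπ : ∀ i, -N+1 ≤ i → i ≤ N-1 → π i ∈ Set.Ioo (0:ℝ) 1)
    (hrec : ∀ i, -N+1 ≤ i → i ≤ N-1 →
      V i = V (i-1) + π i * (V (i+1) - V (i-1)))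
    (hπ1 : π1 ∈ Set.Ioo (0:ℝ) 1)
    (hlow : ∀ i, -N+1 ≤ i → i ≤ N-1 → π1 ≤ π i)
    (hpt : 1/2 < pt) (hpt1 : pt < 1)
    (hbig : ∀ i, (N':ℤ) ≤ i → i ≤ N-1 → pt ≤ π i)
    (hα : α = (1 + (∑ j ∈ Finset.range N', ((1 - π1) / π1) ^ (j+1)) +
      (((1 - pt) / pt) / (1 - (1 - pt) / pt)) * ((1 - π1) / π1) ^ N')⁻¹) :
    0 < α ∧ α * v ≤ V 0 ∧ v - 2 * V 0 ≤ (1 - 2 * α) * v := by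
  set ρ1 := (1 - π1) / π1
  set r := (1 - pt) / pt
  have hρ1 : 0 ≤ ρ1 := one_sub_div_nonneg hπ1.1 hπ1.2.le
  have hr0 : 0 ≤ r := one_sub_div_nonneg (by linarith) hpt1.le
  have hr1 : r < 1 := (div_lt_one (by linarith)).2 (by linarith)
  have hstep : ∀ i, -N < i → i < N → V (i + 1) - V i = (1 - π i) / π i * (V i - V (i - 1)) :=
    fun i _ _ => sub_eq_one_sub_div_mul_sub (hπ i (by omega) (by omega)).1.ne'
      (hrec i (by omega) (by omega))
  have hmono : ∀ i, -N ≤ i → i < N → V i ≤ V (i + 1) :=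
    le_add_one_of_sub_eq_mul (by simpa [hVmN] using (hrange _ (by omega) (by omega)).1)
      (fun i _ _ => one_sub_div_nonneg (hπ i (by omega) (by omega)).1
        (hπ i (by omega) (by omega)).2.le) hstep
  lift N to ℕ using (by omega)
  have hbound : ∀ n : ℕ, n < N →
      V (n + 1) - V n ≤ regimeBound N' ρ1 r n * (V n - V (n - 1)) := by
    intro n hn
    rw [hstep n (by omega) (by omega)]
    refine mul_le_mul_of_nonneg_right (one_sub_div_le_regimeBound hπ1.1 (by linarith)
      (fun _ => hlow n (by omega) (by omega)) (fun h => hbig n (by omega) (by omega))) ?_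
    simpa using hmono (n - 1) (by omega) (by omega)
  have hgap := sub_le_mul_sum_prod_of_sub_le_mul (regimeBound_nonneg hρ1 hr0) hbound
  rw [hVN] at hgap
  set S := ∑ j ∈ range N', ρ1 ^ (j + 1) + r / (1 - r) * ρ1 ^ N'
  have hS : 0 ≤ S := by simpa using sum_prod_range_regimeBound_le (N' := N') hρ1 hr0 hr1 0
  have hV : v ≤ V 0 * (1 + S) := calc
    v ≤ V 0 + (V 0 - V (-1)) * S := by
      have hVm1 : V (-1) ≤ V 0 := by simpa using hmono (-1) (by omega) (by omega)
      linarith [mul_le_mul_of_nonneg_left (sum_prod_range_regimeBound_le (N' := N') hρ1 hr0 hr1 N)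
        (sub_nonneg.2 hVm1)]
    _ ≤ V 0 * (1 + S) := by nlinarith [(hrange (-1) (by omega) (by omega)).1]
  have hα' : α = (1 + S)⁻¹ := by rw [hα, add_assoc]
  have hαpos : 0 < α := hα' ▸ inv_pos.2 (by linarith)
  have hαv : α * v ≤ V 0 := by
    rw [hα', inv_mul_le_iff₀ (by linarith)]
    linarith
  exact ⟨hαpos, hαv, by linarith⟩

/-- with π(i) ≥ π₁* > 0 everywhere and π(i) ≥ π̃ > 1/2 for i ≥ N',
V(0)/v ≥ α with α = [1 + Σ_{j=0}^{N'−1}((1−π₁*)/π₁*)^{j+1} + (r/(1−r))·((1−π₁*)/π₁*)^{N'}]⁻¹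
where r = (1−π̃)/π̃; hence expected total effort v − 2V(0) ≤ (1 − 2α)v,
uniformly over all margins N ≥ 1 and prizes v > 0. -/
theorem stmt_13 (N : ℤ) (N' : ℕ) (v : ℝ) (V π : ℤ → ℝ) (π1 pt α : ℝ)
    (hN : 1 ≤ N) (hv : 0 < v)
    (hrange : ∀ i, -N ≤ i → i ≤ N → V i ∈ Set.Icc (0:ℝ) v)
    (hVN : V N = v) (hVmN : V (-N) = 0)
    (hπ : ∀ i, -N+1 ≤ i → i ≤ N-1 → π i ∈ Set.Ioo (0:ℝ) 1)
    (hrec : ∀ i, -N+1 ≤ i → i ≤ N-1 →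
      V i = V (i-1) + π i * (V (i+1) - V (i-1)))
    (hπ1 : π1 ∈ Set.Ioo (0:ℝ) 1)
    (hlow : ∀ i, -N+1 ≤ i → i ≤ N-1 → π1 ≤ π i)
    (hpt : 1/2 < pt) (hpt1 : pt < 1)
    (hbig : ∀ i, (N':ℤ) ≤ i → i ≤ N-1 → pt ≤ π i)
    (hα : α = (1 + (∑ j ∈ Finset.range N', ((1 - π1) / π1) ^ (j+1)) +
      (((1 - pt) / pt) / (1 - (1 - pt) / pt)) * ((1 - π1) / π1) ^ N')⁻¹) :
    0 < α ∧ α * v ≤ V 0 ∧ v - 2 * V 0 ≤ (1 - 2 * α) * v :=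
  stmt_13_general N N' v V π π1 pt α hN hrange hVN hVmN hπ hrec hπ1 hlow hpt hpt1 hbig hα
end

section
/- In the symmetric MPE of the K-consecutive-win contest, the winning-value ratios satisfy: for 0 ≤ i ≤ K−2, Δ̂(i+1)/Δ̂(−i−1) = [(1 − π̂(−i−1))/π̂(i+1)] · Δ̂(i)/Δ̂(−i). -/
/-!
Both ratios telescope one step at a time. On the leader's side the recursion at `i + 1` reads
`Δ i = π (i + 1) * Δ (i + 1)`; on the trailer's side the recursion at `-i-1` reads
`Δ (-i) = (1 - π (-i-1)) * Δ (-i-1)`, where `Δ 0 = V 1 - V (-1)` plays the role of `Δ (-0)`.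
Dividing the two identities gives the claim.
-/

section ContestGaps

variable {K : ℤ} {V π Δ : ℤ → ℝ}

lemma gap_eq_mul_gap_succ
    (hΔpos : ∀ i, 0 ≤ i → i ≤ K-1 → Δ i = V (i+1) - V (-1))
    (hrecpos : ∀ i, 0 ≤ i → i ≤ K-1 → V i = V (-1) + π i * Δ i)
    {i : ℤ} (hi0 : 0 ≤ i) (hiK : i ≤ K-2) :
    Δ i = π (i+1) * Δ (i+1) := by
  rw [hΔpos i hi0 (by linarith), hrecpos (i+1) (by linarith) (by linarith)]
  ring

lemma gap_neg_eq
    (hΔpos : ∀ i, 0 ≤ i → i ≤ K-1 → Δ i = V (i+1) - V (-1))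
    (hΔneg : ∀ i, -(K-1) ≤ i → i < 0 → Δ i = V 1 - V (i-1))
    {i : ℤ} (hi0 : 0 ≤ i) (hiK : i ≤ K-1) :
    Δ (-i) = V 1 - V (-i-1) := by
  rcases hi0.eq_or_lt with rfl | hi
  · simpa using hΔpos 0 le_rfl hiK
  · exact hΔneg (-i) (by linarith) (by linarith)

lemma gap_neg_eq_mul_gap_pred
    (hΔpos : ∀ i, 0 ≤ i → i ≤ K-1 → Δ i = V (i+1) - V (-1))
    (hΔneg : ∀ i, -(K-1) ≤ i → i < 0 → Δ i = V 1 - V (i-1))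
    (hrecneg : ∀ i, -(K-1) ≤ i → i < 0 → V i = V (i-1) + π i * Δ i)
    {i : ℤ} (hi0 : 0 ≤ i) (hiK : i ≤ K-2) :
    Δ (-i) = (1 - π (-i-1)) * Δ (-i-1) := by
  rw [gap_neg_eq hΔpos hΔneg hi0 (by linarith), hrecneg (-i-1) (by linarith) (by linarith),
    hΔneg (-i-1) (by linarith) (by linarith)]
  ring

end ContestGaps

theorem stmt_14_general (K : ℤ) (V π Δ : ℤ → ℝ)
    (hπ : ∀ i, -(K-1) ≤ i → i ≤ K-1 → π i ∈ Set.Ioo (0:ℝ) 1)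
    (hΔpos : ∀ i, 0 ≤ i → i ≤ K-1 → Δ i = V (i+1) - V (-1))
    (hΔneg : ∀ i, -(K-1) ≤ i → i < 0 → Δ i = V 1 - V (i-1))
    (hrecpos : ∀ i, 0 ≤ i → i ≤ K-1 → V i = V (-1) + π i * Δ i)
    (hrecneg : ∀ i, -(K-1) ≤ i → i < 0 → V i = V (i-1) + π i * Δ i) :
    ∀ i, 0 ≤ i → i ≤ K-2 →
      Δ (i+1) / Δ (-i-1) = ((1 - π (-i-1)) / π (i+1)) * (Δ i / Δ (-i)) := by
  intro i hi0 hiK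
  have hπlead : π (i+1) ≠ 0 := (hπ (i+1) (by linarith) (by linarith)).1.ne'
  have hπtrail : 1 - π (-i-1) ≠ 0 :=
    sub_ne_zero.2 (hπ (-i-1) (by linarith) (by linarith)).2.ne'
  rw [gap_eq_mul_gap_succ hΔpos hrecpos hi0 hiK,
    gap_neg_eq_mul_gap_pred hΔpos hΔneg hrecneg hi0 hiK,
    mul_div_mul_comm, ← mul_assoc, div_mul_div_comm, mul_comm (π (i+1)),
    div_self (mul_ne_zero hπtrail hπlead), one_mul]

/-- self-reinforcement in the K-consecutive-win contest:
for 0 ≤ i ≤ K−2, Δ̂(i+1)/Δ̂(−i−1) = [(1 − π̂(−i−1))/π̂(i+1)]·Δ̂(i)/Δ̂(−i). -/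
theorem stmt_14 (K : ℤ) (v : ℝ) (V π Δ : ℤ → ℝ) (hK : 2 ≤ K) (hv : 0 < v)
    (hVK : V K = v) (hVmK : V (-K) = 0)
    (hπ : ∀ i, -(K-1) ≤ i → i ≤ K-1 → π i ∈ Set.Ioo (0:ℝ) 1)
    (hΔpos : ∀ i, 0 ≤ i → i ≤ K-1 → Δ i = V (i+1) - V (-1))
    (hΔneg : ∀ i, -(K-1) ≤ i → i < 0 → Δ i = V 1 - V (i-1))
    (hrecpos : ∀ i, 0 ≤ i → i ≤ K-1 → V i = V (-1) + π i * Δ i)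
    (hrecneg : ∀ i, -(K-1) ≤ i → i < 0 → V i = V (i-1) + π i * Δ i)
    (hmono : ∀ i j, -K ≤ i → i < j → j ≤ K → V i < V j) :
    ∀ i, 0 ≤ i → i ≤ K-2 →
      Δ (i+1) / Δ (-i-1) = ((1 - π (-i-1)) / π (i+1)) * (Δ i / Δ (-i)) :=
  stmt_14_general K V π Δ hπ hΔpos hΔneg hrecpos hrecneg
end

section
/- Suppose an equilibrium of a contest with prize v satisfies the transient dominance property with parameter ε > 0: (i) at any history in H_ℓ^−, player ℓ's continuation value is at most εv; (ii) with probability at least 1 − ε the realized outcome path visits both H_A^− and H_B^−. Then each player's ex-ante equilibrium payoff is at most 2εv, and the expected equilibrium total effort exceeds (1 − 4ε)v. -/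
lemma stmt_16_aux (ε v VA : ℝ) (hε : 0 < ε) (hv : 0 < v)
    (Pr VAat : ℕ → ℝ) (reaches : ℕ → Prop) [DecidablePred reaches]
    (hPr : ∀ h, 0 ≤ Pr h) (hsum : Summable Pr) (htot : ∑' h, Pr h = 1)
    (hVAat : ∀ h, reaches h → VAat h ≤ ε * v)
    (hVAat0 : ∀ h, 0 ≤ VAat h)
    (hVAbound : VA ≤ ∑' h, (if reaches h then Pr h * VAat h else Pr h * v))
    (hB : 1 - ε ≤ ∑' h, (if reaches h then Pr h else 0)) :
    VA ≤ 2 * ε * v := by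
  have hind : Summable (fun h => if reaches h then Pr h else 0) :=
    hsum.of_nonneg_of_le (fun h => by split <;> simp [hPr h]) (fun h => by split <;> simp [hPr h])
  have hnotind : Summable (fun h => if reaches h then 0 else Pr h) :=
    hsum.of_nonneg_of_le (fun h => by split <;> simp [hPr h]) (fun h => by split <;> simp [hPr h])
  have hsplit : (∑' h, (if reaches h then Pr h else 0)) +
      (∑' h, (if reaches h then 0 else Pr h)) = 1 := by
    rw [← Summable.tsum_add hind hnotind]
    rw [← htot]
    congr 1
    funext h
    split <;> simp
  have hnotle : (∑' h, (if reaches h then 0 else Pr h)) ≤ ε := by linarith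
  have hg : Summable (fun h => ε * v * Pr h + v * (if reaches h then 0 else Pr h)) :=
    (hsum.mul_left _).add (hnotind.mul_left _)
  have hfg : ∀ h, (if reaches h then Pr h * VAat h else Pr h * v) ≤
      ε * v * Pr h + v * (if reaches h then 0 else Pr h) := by
    intro h
    by_cases hr : reaches h <;> simp [hr]
    · have := hVAat h hr
      have := hPr h
      nlinarith
    · nlinarith [mul_nonneg (mul_nonneg hε.le hv.le) (hPr h)]
  have hf : Summable (fun h => if reaches h then Pr h * VAat h else Pr h * v) := by
    apply hg.of_nonneg_of_le _ hfg
    intro h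
    by_cases hr : reaches h <;> simp [hr]
    · exact mul_nonneg (hPr h) (hVAat0 h)
    · exact mul_nonneg (hPr h) hv.le
  have hle : (∑' h, (if reaches h then Pr h * VAat h else Pr h * v)) ≤
      ∑' h, (ε * v * Pr h + v * (if reaches h then 0 else Pr h)) :=
    Summable.tsum_le_tsum hfg hf hg
  have heq : (∑' h, (ε * v * Pr h + v * (if reaches h then 0 else Pr h)))
      = ε * v * (∑' h, Pr h) + v * ∑' h, (if reaches h then 0 else Pr h) := by
    rw [Summable.tsum_add (hsum.mul_left _) (hnotind.mul_left _), tsum_mul_left, tsum_mul_left]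
  have hvm : v * (∑' h, (if reaches h then 0 else Pr h)) ≤ v * ε :=
    mul_le_mul_of_nonneg_left hnotle hv.le
  rw [heq, htot] at hle
  nlinarith

/-- if an equilibrium satisfies the transient dominance property with
parameter ε (continuation values at most εv on the weak sets, and the path visits both
weak sets with probability at least 1−ε), then each player's ex-ante payoff is at most
2εv and expected total effort v − V_A* − V_B* is at least (1−4ε)v. -/
theorem stmt_16 (ε v VA VB : ℝ) (hε : 0 < ε) (hv : 0 < v)
    (Pr VAat VBat : ℕ → ℝ) (reachesA reachesB : ℕ → Prop)
    [DecidablePred reachesA] [DecidablePred reachesB]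
    (hPr : ∀ h, 0 ≤ Pr h) (hsum : Summable Pr) (htot : ∑' h, Pr h = 1)
    (hVAat : ∀ h, reachesB h → VAat h ≤ ε * v)
    (hVBat : ∀ h, reachesA h → VBat h ≤ ε * v)
    (hVAat0 : ∀ h, 0 ≤ VAat h) (hVBat0 : ∀ h, 0 ≤ VBat h)
    (hVAbound : VA ≤ ∑' h, (if reachesB h then Pr h * VAat h else Pr h * v))
    (hVBbound : VB ≤ ∑' h, (if reachesA h then Pr h * VBat h else Pr h * v))
    (hboth : 1 - ε ≤ ∑' h, (if reachesA h ∧ reachesB h then Pr h else 0)) :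
    VA ≤ 2 * ε * v ∧ VB ≤ 2 * ε * v ∧ (1 - 4 * ε) * v ≤ v - VA - VB := by
  have hindboth : Summable (fun h => if reachesA h ∧ reachesB h then Pr h else 0) :=
    hsum.of_nonneg_of_le (fun h => by split <;> simp [hPr h]) (fun h => by split <;> simp [hPr h])
  have hindA : Summable (fun h => if reachesA h then Pr h else 0) :=
    hsum.of_nonneg_of_le (fun h => by split <;> simp [hPr h]) (fun h => by split <;> simp [hPr h])
  have hindB : Summable (fun h => if reachesB h then Pr h else 0) :=
    hsum.of_nonneg_of_le (fun h => by split <;> simp [hPr h]) (fun h => by split <;> simp [hPr h])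
  have hbothA : 1 - ε ≤ ∑' h, (if reachesA h then Pr h else 0) := by
    refine le_trans hboth (Summable.tsum_le_tsum (fun h => ?_) hindboth hindA)
    by_cases hA : reachesA h <;> by_cases hB : reachesB h <;> simp [hA, hB, hPr h]
  have hbothB : 1 - ε ≤ ∑' h, (if reachesB h then Pr h else 0) := by
    refine le_trans hboth (Summable.tsum_le_tsum (fun h => ?_) hindboth hindB)
    by_cases hA : reachesA h <;> by_cases hB : reachesB h <;> simp [hA, hB, hPr h]
  have h1 := stmt_16_aux ε v VA hε hv Pr VAat reachesB hPr hsum htot hVAat hVAat0 hVAbound hbothB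
  have h2 := stmt_16_aux ε v VB hε hv Pr VBat reachesA hPr hsum htot hVBat hVBat0 hVBbound hbothA
  exact ⟨h1, h2, by nlinarith⟩
end

section
/- In the M(K,1) contest, where the advantaged player wins the overall prize v' by winning a single battle while the disadvantaged player must win K consecutive battles first, the payoffs satisfy the recursion (v' − V₊^K)/V₋^K = [(1 − π₊^{K−1})/π₋^{K−1}] · (v' − V₊^{K−1})/V₋^{K−1}, where π₊^{K−1}, π₋^{K−1} ∈ (0,1) with π₊^{K−1} + π₋^{K−1} ≤ 1. If additionally (1 − π₊)/π₋ ≥ 1 + d whenever the current ratio is below R'' (for constants R'' > 1, d > 0), then (v' − V₊^K)/V₋^K > R'' for all K > log_{1+d}R'' + 1, given the initial ratio (v' − V₊^1)/V₋^1 ≥ 1. Hence the ratio diverges to +∞ as K → +∞. -/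
/-- in the M(K,1) contest, (v'−V₊^{K+1})/V₋^{K+1}
= [(1−π₊^K)/π₋^K]·(v'−V₊^K)/V₋^K; if (1−π₊)/π₋ ≥ 1+d whenever the ratio is ≤ R'' and
the initial ratio is ≥ 1, then the ratio exceeds R'' for all K > log_{1+d}R'' + 1, and
it diverges to +∞ as K → +∞. -/
theorem stmt_17 (v' R'' d : ℝ) (hv : 0 < v') (hR : 1 < R'') (hd : 0 < d)
    (Vp Vm πp πm : ℕ → ℝ)
    (hπ : ∀ K, 1 ≤ K → πp K ∈ Set.Ioo (0:ℝ) 1 ∧ πm K ∈ Set.Ioo (0:ℝ) 1 ∧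
      πp K + πm K ≤ 1)
    (hVm : ∀ K, 1 ≤ K → 0 < Vm K)
    (hVp : ∀ K, 1 ≤ K → Vp K < v')
    (hrecp : ∀ K, 1 ≤ K → Vp (K+1) = Vp K + πp K * (v' - Vp K))
    (hrecm : ∀ K, 1 ≤ K → Vm (K+1) = πm K * Vm K)
    (hinit : 1 ≤ (v' - Vp 1) / Vm 1)
    (hgrow : ∀ K, 1 ≤ K → (v' - Vp K) / Vm K ≤ R'' → 1 + d ≤ (1 - πp K) / πm K)
    (hgrow' : ∀ R : ℝ, 1 < R → ∃ e : ℝ, 0 < e ∧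
      ∀ K, 1 ≤ K → ((v' - Vp K) / Vm K ≤ R → 1 + e ≤ (1 - πp K) / πm K)) :
    (∀ K, 1 ≤ K →
      (v' - Vp (K+1)) / Vm (K+1) = ((1 - πp K) / πm K) * ((v' - Vp K) / Vm K)) ∧
    (∀ K : ℕ, Real.logb (1+d) R'' + 1 < (K:ℝ) → R'' < (v' - Vp K) / Vm K) ∧
    Filter.Tendsto (fun K => (v' - Vp K) / Vm K) Filter.atTop Filter.atTop := by
  set r : ℕ → ℝ := fun K => (v' - Vp K) / Vm K with hrdef
  have hrec : ∀ K, 1 ≤ K → r (K+1) = ((1 - πp K) / πm K) * r K := by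
    intro K hK
    simp only [hrdef]
    rw [hrecp K hK, hrecm K hK]
    have h1 : v' - (Vp K + πp K * (v' - Vp K)) = (1 - πp K) * (v' - Vp K) := by ring
    rw [h1, mul_div_mul_comm]
  have hf1 : ∀ K, 1 ≤ K → (1:ℝ) ≤ (1 - πp K) / πm K := by
    intro K hK
    obtain ⟨hp, hm, hs⟩ := hπ K hK
    rw [le_div_iff₀ hm.1]
    linarith
  have key : ∀ (R e : ℝ), 0 < R → 0 < e →
      (∀ K, 1 ≤ K → r K ≤ R → 1 + e ≤ (1 - πp K) / πm K) →
      ∀ m : ℕ, R < r (m+1) ∨ (1+e)^m ≤ r (m+1) := by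
    intro R e hR0 he hg m
    induction m with
    | zero => right; simpa using hinit
    | succ n ih =>
      have hK : 1 ≤ n + 1 := Nat.le_add_left 1 n
      have hf := hf1 (n+1) hK
      rw [hrec (n+1) hK]
      rcases ih with h | h
      · left
        have h2 : r (n+1) ≤ ((1 - πp (n+1)) / πm (n+1)) * r (n+1) :=
          le_mul_of_one_le_left (by linarith) hf
        linarith
      · by_cases hle : r (n+1) ≤ R
        · right
          have hge := hg (n+1) hK hle
          have hpos : (0:ℝ) < (1+e)^n := by positivity
          calc (1+e)^(n+1) = (1+e) * (1+e)^n := by ring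
            _ ≤ ((1 - πp (n+1)) / πm (n+1)) * r (n+1) :=
                mul_le_mul hge h (le_of_lt hpos) (by linarith)
        · left
          push_neg at hle
          have h2 : r (n+1) ≤ ((1 - πp (n+1)) / πm (n+1)) * r (n+1) :=
            le_mul_of_one_le_left (by linarith) hf
          linarith
  refine ⟨hrec, ?_, ?_⟩
  · intro K hK
    have hlog : 0 < Real.logb (1+d) R'' :=
      Real.logb_pos (by linarith) hR
    have hK1 : (1:ℝ) < (K:ℝ) := by linarith
    have hK2 : 2 ≤ K := by exact_mod_cast Nat.one_lt_cast.mp hK1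
    obtain ⟨m, rfl⟩ : ∃ m, K = m + 1 := ⟨K - 1, by omega⟩
    rcases key R'' d (by linarith) hd hgrow m with h | h
    · exact h
    · refine lt_of_lt_of_le ?_ h
      have hm : Real.logb (1+d) R'' < (m:ℝ) := by push_cast at hK ⊢; linarith
      have h1d : (1:ℝ) < 1 + d := by linarith
      have := (Real.rpow_lt_rpow_left_iff h1d).mpr hm
      rwa [Real.rpow_logb (by linarith) (by linarith) (by linarith),
        Real.rpow_natCast] at this
  · rw [Filter.tendsto_atTop]
    intro b
    rw [Filter.eventually_atTop]
    set R : ℝ := max b 2 with hRdef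
    have hR1 : 1 < R := lt_of_lt_of_le one_lt_two (le_max_right _ _)
    obtain ⟨e, he, hg⟩ := hgrow' R hR1
    have h1e : (1:ℝ) < 1 + e := by linarith
    obtain ⟨N, hN⟩ := ((tendsto_pow_atTop_atTop_of_one_lt h1e).eventually_ge_atTop R).exists_forall_of_atTop
    refine ⟨N + 1, fun K hK => ?_⟩
    obtain ⟨m, rfl⟩ : ∃ m, K = m + 1 := ⟨K - 1, by omega⟩
    have hbR : b ≤ R := le_max_left _ _
    rcases key R e (by linarith) he hg m with h | h
    · linarith
    · have := hN m (by omega)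
      linarith
end

section
/- Consider the tug-of-war with random resets and its normalized increments Δ̃(i) := (Ṽ(i) − Ṽ(0))/(Ṽ(1) − Ṽ(−1)). Given a reset probability p ∈ (0,1), the recursion Δ̃(k+1) = Δ̃(k−1) + [Δ̃(k)/(1−p) − Δ̃(k−1)]/φ(θ_k) implies Δ̃(k+1) > Δ̃(k)/(1−p), and Δ̃(−k−1) = Δ̃(−k)/[(1−p)(1−φ(1/θ_k))] + φ(1/θ_k)(−Δ̃(1−k))/(1−φ(1/θ_k)) implies Δ̃(−k−1) < Δ̃(−k)/(1−p), for θ_k > 0 and 0 < φ(θ) < 1 for all θ > 0, assuming the strict monotonicity Δ̃(k) > Δ̃(k−1) > ⋯ > 0 > ⋯ > Δ̃(−k). Consequently, the strict ordering Δ̃(k+1) > Δ̃(k) > ⋯ > Δ̃(−k) > Δ̃(−k−1) extends by induction. -/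
/-- extension of the strict ordering of the normalized increments Δ̃ in the
tug-of-war with random resets: the recursions imply Δ̃(k+1) > Δ̃(k)/(1−p) and
Δ̃(−k−1) < Δ̃(−k)/(1−p), so the strict ordering extends by one step. -/
theorem stmt_18 (γ φ : ℝ → ℝ)
    (hd : ∀ x, 0 < x → DifferentiableAt ℝ γ x)
    (hd2 : ∀ x, 0 < x → DifferentiableAt ℝ (deriv γ) x)
    (hpos : ∀ x, 0 < x → 0 < deriv γ x)
    (hconc : ∀ x, 0 < x → deriv (deriv γ) x ≤ 0)
    (hsym : ∀ x, 0 < x → γ x + γ (1/x) = 1)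
    (hφdef : ∀ t, φ t = γ t - t * deriv γ t)
    (hφrange : ∀ t : ℝ, 0 < t → 0 < φ t ∧ φ t < 1)
    (p : ℝ) (hp : p ∈ Set.Ioo (0:ℝ) 1)
    (Δ : ℤ → ℝ) (θ : ℤ → ℝ) (hθ : ∀ i, 0 < θ i)
    (k : ℤ) (hk : 1 ≤ k)
    (hΔ0 : Δ 0 = 0)
    (hmono : ∀ i j, -k ≤ i → i < j → j ≤ k → Δ i < Δ j)
    (hfwd : Δ (k+1) = Δ (k-1) + (Δ k / (1-p) - Δ (k-1)) / φ (θ k))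
    (hbwd : Δ (-k-1) = Δ (-k) / ((1-p) * (1 - φ (1 / θ k))) +
      φ (1 / θ k) * (-(Δ (1-k))) / (1 - φ (1 / θ k))) :
    Δ k / (1-p) < Δ (k+1) ∧ Δ (-k-1) < Δ (-k) / (1-p) ∧
      ∀ i j, -(k+1) ≤ i → i < j → j ≤ k+1 → Δ i < Δ j := by

  obtain ⟨hp0, hp1⟩ := hp
  have hq0 : (0:ℝ) < 1 - p := by linarith
  have hq1 : (1:ℝ) - p < 1 := by linarith
  obtain ⟨hφk0, hφk1⟩ := hφrange (θ k) (hθ k)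
  obtain ⟨hψ0, hψ1⟩ := hφrange (1/θ k) (one_div_pos.mpr (hθ k))
  have hs : (0:ℝ) < 1 - φ (1/θ k) := by linarith
  have h1 : Δ (k-1) < Δ k := hmono _ _ (by omega) (by omega) le_rfl
  have h2 : 0 < Δ k := by
    have := hmono 0 k (by omega) (by omega) le_rfl
    simpa [hΔ0] using this
  have h3 : Δ (-k) < 0 := by
    have := hmono (-k) 0 le_rfl (by omega) (by omega)
    simpa [hΔ0] using this
  have h4 : Δ (-k) < Δ (1-k) := hmono _ _ le_rfl (by omega) (by omega)
  have hAq : Δ k < Δ k / (1-p) := by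
    rw [lt_div_iff₀ hq0]; nlinarith
  have hfwd' : Δ k / (1-p) < Δ (k+1) := by
    have hpos' : 0 < Δ k / (1-p) - Δ (k-1) := by linarith
    have h5 : Δ k / (1-p) - Δ (k-1) < (Δ k / (1-p) - Δ (k-1)) / φ (θ k) := by
      rw [lt_div_iff₀ hφk0]; nlinarith
    linarith [hfwd]
  have hdivlt : Δ (-k) / (1-p) < Δ (-k) := by
    rw [div_lt_iff₀ hq0]; nlinarith
  have hbwd' : Δ (-k-1) < Δ (-k) / (1-p) := by
    have key : Δ (-k) < (1-p) * Δ (1-k) := by nlinarith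
    rw [hbwd, ← sub_pos]
    have hq' : (1:ℝ) - p ≠ 0 := ne_of_gt hq0
    have hs' : (1:ℝ) - φ (1/θ k) ≠ 0 := ne_of_gt hs
    have expand : Δ (-k) / (1-p) - (Δ (-k) / ((1-p) * (1 - φ (1/θ k))) +
        φ (1/θ k) * (-(Δ (1-k))) / (1 - φ (1/θ k)))
        = φ (1/θ k) * ((1-p) * Δ (1-k) - Δ (-k)) / ((1-p) * (1 - φ (1/θ k))) := by
      field_simp
      ring
    rw [expand]
    exact div_pos (mul_pos hψ0 (by linarith)) (mul_pos hq0 hs)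
  refine ⟨hfwd', hbwd', ?_⟩
  have htop : Δ k < Δ (k+1) := lt_trans hAq hfwd'
  have hbot : Δ (-k-1) < Δ (-k) := lt_trans hbwd' hdivlt
  have hneg : Δ (-(k+1)) = Δ (-k-1) := by congr 1; ring
  have hmk : Δ (-k) < Δ k := hmono _ _ le_rfl (by omega) le_rfl
  intro i j hi hij hj
  rcases eq_or_lt_of_le hi with hi1 | hi1
  · rw [← hi1, hneg]
    rcases eq_or_lt_of_le hj with hj1 | hj1
    · rw [hj1]; exact lt_trans hbot (lt_trans hmk htop)
    · have hj2 : j ≤ k := by omega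
      rcases eq_or_lt_of_le (show -k ≤ j by omega) with hj3 | hj3
      · rw [← hj3]; exact hbot
      · exact lt_trans hbot (hmono _ _ le_rfl hj3 hj2)
  · have hi2 : -k ≤ i := by omega
    rcases eq_or_lt_of_le hj with hj1 | hj1
    · rw [hj1]
      rcases eq_or_lt_of_le (show i ≤ k by omega) with hi3 | hi3
      · rw [hi3]; exact htop
      · exact lt_trans (hmono _ _ hi2 hi3 le_rfl) htop
    · exact hmono _ _ hi2 hij (by omega)
end
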